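/- Let φ: E → F be a morphism of first-quadrant-bounded spectral sequences (in an abelian category) converging to filtered abutments H_E and H_F. Suppose that on the E_2 page, φ_2^{p,q}: E_2^{p,q} → F_2^{p,q} is an isomorphism for all p ≤ -2, a monomorphism for p = -1, and zero for p = 0, and that both spectral sequences vanish in columns p > 0. Then φ_∞^{p,q} is a monomorphism for every p ≤ -1, and the kernel of the induced map H(φ): H_E → H_F equals the filtration subspace L^0 H_E. -/

import Mathlib

open CategoryTheory

/-- A bounded, convergent, cohomological spectral sequence of abelian groups,
starting at the `E₂`-page.  The field `E r` is the page `E_{r+2}`; `d` is the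
differential `E_r^{p,q} → E_r^{p+r, q-r+1}`; `next` identifies the `(r+1)`-st page
with the homology (kernel modulo image) of the `r`-th page; `H` is the graded
abutment, with finite decreasing filtration `L` whose graded pieces
`L^s H^{s+t}/L^{s+1} H^{s+t}` are identified (`stabIso`) with the stable value
`E_∞^{s,t} = E_r^{s,t}` for `r ≥ stab s t`. -/
structure ConvSS : Type 1 where
  E : ℕ → ℤ → ℤ → AddCommGrpCat.{0}
  d : ∀ (r : ℕ) (p q p' q' : ℤ), p + ((r : ℤ) + 2) = p' → q - ((r : ℤ) + 2) + 1 = q' →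
      (↥(E r p q) →+ ↥(E r p' q'))
  d_comp_d : ∀ (r : ℕ) (p q p' q' p'' q'' : ℤ) (h1 : p + ((r : ℤ) + 2) = p')
      (h2 : q - ((r : ℤ) + 2) + 1 = q') (h3 : p' + ((r : ℤ) + 2) = p'')
      (h4 : q' - ((r : ℤ) + 2) + 1 = q''),
      (d r p' q' p'' q'' h3 h4).comp (d r p q p' q' h1 h2) = 0
  next : ∀ (r : ℕ) (p q : ℤ),
      ↥(E (r + 1) p q) ≃+
        (↥((d r p q (p + ((r : ℤ) + 2)) (q - ((r : ℤ) + 2) + 1) rfl rfl).ker) ⧸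
          ((d r (p - ((r : ℤ) + 2)) (q + ((r : ℤ) + 2) - 1) p q (by ring)
              (by ring)).range.addSubgroupOf
            (d r p q (p + ((r : ℤ) + 2)) (q - ((r : ℤ) + 2) + 1) rfl rfl).ker))
  bound : ℕ
  bdd : ∀ (r : ℕ) (p q : ℤ), ((bound : ℤ) < |p| ∨ (bound : ℤ) < |q|) →
      Subsingleton ↥(E r p q)
  H : ℤ → AddCommGrpCat.{0}
  L : ℤ → (n : ℤ) → AddSubgroup ↥(H n)
  L_antitone : ∀ n : ℤ, Antitone (fun s => L s n)
  L_exhaustive : ∀ n : ℤ, ∃ s : ℤ, L s n = ⊤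
  L_separated : ∀ n : ℤ, ∃ s : ℤ, L s n = ⊥
  stab : ℤ → ℤ → ℕ
  stabIso : ∀ (s t : ℤ) (r : ℕ), stab s t ≤ r →
      ((↥(L s (s + t)) ⧸ (L (s + 1) (s + t)).addSubgroupOf (L s (s + t))) ≃+
        ↥(E r s t))

/-- A morphism of convergent spectral sequences: maps on every page commuting with the
differentials and compatible with the passage to the next page (induced map on
homology), together with a filtered map of abutments compatible with the
identification of the graded pieces with the stable pages. -/
structure ConvSS.Hom (A B : ConvSS) where
  f : ∀ (r : ℕ) (p q : ℤ), ↥(A.E r p q) →+ ↥(B.E r p q)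
  comm : ∀ (r : ℕ) (p q p' q' : ℤ) (h1 : p + ((r : ℤ) + 2) = p')
      (h2 : q - ((r : ℤ) + 2) + 1 = q'),
      (f r p' q').comp (A.d r p q p' q' h1 h2) = (B.d r p q p' q' h1 h2).comp (f r p q)
  compat_next : ∀ (r : ℕ) (p q : ℤ)
      (x : ↥((A.d r p q (p + ((r : ℤ) + 2)) (q - ((r : ℤ) + 2) + 1) rfl rfl).ker))
      (y : ↥((B.d r p q (p + ((r : ℤ) + 2)) (q - ((r : ℤ) + 2) + 1) rfl rfl).ker))
      (_ : (y : ↥(B.E r p q)) = f r p q (x : ↥(A.E r p q)))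
      (z : ↥(A.E (r + 1) p q)),
      A.next r p q z = QuotientAddGroup.mk x →
      B.next r p q (f (r + 1) p q z) = QuotientAddGroup.mk y
  h : ∀ n : ℤ, ↥(A.H n) →+ ↥(B.H n)
  filt : ∀ (s n : ℤ), (A.L s n).map (h n) ≤ B.L s n
  compat_abut : ∀ (s t : ℤ) (r : ℕ) (hA : A.stab s t ≤ r) (hB : B.stab s t ≤ r)
      (x : ↥(A.L s (s + t))) (y : ↥(B.L s (s + t)))
      (_ : (y : ↥(B.H (s + t))) = h (s + t) (x : ↥(A.H (s + t)))),
      B.stabIso s t r hB (QuotientAddGroup.mk y) =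
        f r s t (A.stabIso s t r hA (QuotientAddGroup.mk x))

/-! On each page a morphism that is injective at a spot and surjective at the source of the
incoming differential is injective on homology, and dually for surjectivity. Starting from the
`E₂` hypotheses, injectivity in the columns `p ≤ -1` therefore survives to `E_∞`, while
surjectivity recedes by one column per page. As `E_∞` is the associated graded of the
abutment, an element of `ker H(φ)` lying in `L^s` with `s ≤ -1` lies in `L^{s+1}`, so it climbs
to `L^0`. Conversely `φ_∞` vanishes in column `0`, so `H(φ)` maps `L^0 H_E` into `L^1 H_F`,
which is zero because `F` vanishes in the columns `p > 0`. -/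

theorem Antitone.le_of_inf_le_succ {α : Type*} [Lattice α] [OrderTop α] {F : ℤ → α}
    (hF : Antitone F) (htop : ∃ s, F s = ⊤) {a : α} {k : ℤ}
    (hstep : ∀ s < k, a ⊓ F s ≤ F (s + 1)) : a ≤ F k := by
  obtain ⟨s₀, hs₀⟩ := htop
  have hclimb : ∀ s, min s₀ k ≤ s → s ≤ k → a ≤ F s := by
    intro s hs
    induction s, hs using Int.leInduction with
    | base => exact fun _ => le_top.trans (hs₀ ▸ hF (min_le_left s₀ k))
    | succ s _ ih =>
      exact fun hsk => (le_inf le_rfl (ih (by omega))).trans (hstep s (by omega))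
  exact hclimb k (min_le_right s₀ k) le_rfl

theorem Antitone.eq_bot_of_le_succ {α : Type*} [PartialOrder α] [OrderBot α] {F : ℤ → α}
    (hF : Antitone F) (hbot : ∃ s, F s = ⊥) {k : ℤ}
    (hstep : ∀ s, k ≤ s → F s ≤ F (s + 1)) : F k = ⊥ := by
  obtain ⟨s₀, hs₀⟩ := hbot
  have hdesc : ∀ s, k ≤ s → F k ≤ F s := by
    intro s hs
    induction s, hs using Int.leInduction with
    | base => exact le_rfl
    | succ s hs ih => exact ih.trans (hstep s hs)
  exact eq_bot_iff.2 ((hdesc _ (le_max_left k s₀)).trans (hs₀ ▸ hF (le_max_right k s₀)))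

namespace ConvSS

variable (A : ConvSS)

abbrev dOut (r : ℕ) (p q : ℤ) :
    ↥(A.E r p q) →+ ↥(A.E r (p + ((r : ℤ) + 2)) (q - ((r : ℤ) + 2) + 1)) :=
  A.d r p q _ _ rfl rfl

abbrev dIn (r : ℕ) (p q : ℤ) :
    ↥(A.E r (p - ((r : ℤ) + 2)) (q + ((r : ℤ) + 2) - 1)) →+ ↥(A.E r p q) :=
  A.d r _ _ p q (by ring) (by ring)

variable {A}

theorem eq_zero_iff_mem_range_dIn {r : ℕ} {p q : ℤ} {z : ↥(A.E (r + 1) p q)}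
    {x : (A.dOut r p q).ker} (hx : A.next r p q z = QuotientAddGroup.mk x) :
    z = 0 ↔ (x : ↥(A.E r p q)) ∈ (A.dIn r p q).range := by
  rw [← (A.next r p q).map_eq_zero_iff, hx, QuotientAddGroup.eq_zero_iff,
    AddSubgroup.mem_addSubgroupOf]

theorem subsingleton_E_succ {r : ℕ} {p q : ℤ} [Subsingleton ↥(A.E r p q)] :
    Subsingleton ↥(A.E (r + 1) p q) :=
  have : Subsingleton
      ((A.dOut r p q).ker ⧸ (A.dIn r p q).range.addSubgroupOf (A.dOut r p q).ker) :=
    QuotientAddGroup.mk_surjective.subsingleton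
  (A.next r p q).toEquiv.subsingleton

theorem subsingleton_E {p q : ℤ} (h : Subsingleton ↥(A.E 0 p q)) (r : ℕ) :
    Subsingleton ↥(A.E r p q) := by
  induction r with
  | zero => exact h
  | succ r _ => exact subsingleton_E_succ

theorem stabIso_mk_eq_zero_iff {s t : ℤ} {r : ℕ} (hr : A.stab s t ≤ r) {x : ↥(A.H (s + t))}
    (hx : x ∈ A.L s (s + t)) :
    A.stabIso s t r hr (QuotientAddGroup.mk ⟨x, hx⟩) = 0 ↔ x ∈ A.L (s + 1) (s + t) := by
  rw [AddEquiv.map_eq_zero_iff, QuotientAddGroup.eq_zero_iff, AddSubgroup.mem_addSubgroupOf]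

theorem L_le_L_succ_of_subsingleton {s t : ℤ} (h : Subsingleton ↥(A.E (A.stab s t) s t)) :
    A.L s (s + t) ≤ A.L (s + 1) (s + t) := fun _ hx =>
  (A.stabIso_mk_eq_zero_iff le_rfl hx).1 (Subsingleton.elim _ _)

theorem L_eq_bot_of_subsingleton (k n : ℤ)
    (h : ∀ s t : ℤ, k ≤ s → Subsingleton ↥(A.E (A.stab s t) s t)) : A.L k n = ⊥ :=
  (A.L_antitone n).eq_bot_of_le_succ (A.L_separated n) fun s hs => by
    obtain ⟨t, rfl⟩ : ∃ t, n = s + t := ⟨n - s, by ring⟩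
    exact L_le_L_succ_of_subsingleton (h s t hs)

namespace Hom

variable {B : ConvSS} (φ : A.Hom B)

theorem f_dOut (r : ℕ) (p q : ℤ) (x : ↥(A.E r p q)) :
    φ.f r _ _ (A.dOut r p q x) = B.dOut r p q (φ.f r p q x) :=
  DFunLike.congr_fun (φ.comm r p q _ _ rfl rfl) x

theorem f_dIn (r : ℕ) (p q : ℤ)
    (x : ↥(A.E r (p - ((r : ℤ) + 2)) (q + ((r : ℤ) + 2) - 1))) :
    φ.f r p q (A.dIn r p q x) = B.dIn r p q (φ.f r _ _ x) :=
  DFunLike.congr_fun (φ.comm r _ _ p q _ _) x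

theorem f_mem_ker_dOut {r : ℕ} {p q : ℤ} (x : (A.dOut r p q).ker) :
    φ.f r p q x ∈ (B.dOut r p q).ker := by
  rw [AddMonoidHom.mem_ker, ← f_dOut, AddMonoidHom.mem_ker.mp x.2, map_zero]

theorem f_succ_eq_zero {r : ℕ} {p q : ℤ} (h : φ.f r p q = 0) : φ.f (r + 1) p q = 0 := by
  ext z
  obtain ⟨x, hx⟩ := QuotientAddGroup.mk_surjective (A.next r p q z)
  have hy := φ.compat_next r p q x 0 (by simp [h]) z hx.symm
  rw [AddMonoidHom.zero_apply, ← (B.next r p q).map_eq_zero_iff, hy, QuotientAddGroup.mk_zero]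

theorem injective_f_succ {r : ℕ} {p q : ℤ} (hinj : Function.Injective (φ.f r p q))
    (hsurj : Function.Surjective (φ.f r (p - ((r : ℤ) + 2)) (q + ((r : ℤ) + 2) - 1))) :
    Function.Injective (φ.f (r + 1) p q) := by
  rw [injective_iff_map_eq_zero]
  intro z hz
  obtain ⟨x, hx⟩ := QuotientAddGroup.mk_surjective (A.next r p q z)
  have hy := φ.compat_next r p q x ⟨_, φ.f_mem_ker_dOut x⟩ rfl z hx.symm
  obtain ⟨u, hu⟩ := (eq_zero_iff_mem_range_dIn hy).1 hz
  obtain ⟨v, rfl⟩ := hsurj u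
  refine (eq_zero_iff_mem_range_dIn hx.symm).2 ⟨v, hinj ?_⟩
  rw [f_dIn, hu]

theorem surjective_f_succ {r : ℕ} {p q : ℤ} (hsurj : Function.Surjective (φ.f r p q))
    (hinj : Function.Injective (φ.f r (p + ((r : ℤ) + 2)) (q - ((r : ℤ) + 2) + 1))) :
    Function.Surjective (φ.f (r + 1) p q) := by
  intro w
  obtain ⟨y, hy⟩ := QuotientAddGroup.mk_surjective (B.next r p q w)
  obtain ⟨x, hx⟩ := hsurj y
  have hxker : x ∈ (A.dOut r p q).ker := by
    rw [AddMonoidHom.mem_ker]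
    apply hinj
    rw [f_dOut, hx, AddMonoidHom.mem_ker.mp y.2, map_zero]
  refine ⟨(A.next r p q).symm (QuotientAddGroup.mk ⟨x, hxker⟩), (B.next r p q).injective ?_⟩
  rw [φ.compat_next r p q ⟨x, hxker⟩ y hx.symm _ (AddEquiv.apply_symm_apply _ _), hy]

-- The differential of page `r` entering a column `p ≤ -1` starts in a column `≤ -r-3`, where
-- `φ` is still surjective, and the one leaving a column `p ≤ -r-3` lands in a column `≤ -1`.
theorem f_eq_zero_injective_surjective
    (hiso : ∀ p q : ℤ, p ≤ -2 → Function.Bijective (φ.f 0 p q))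
    (hmono : ∀ q : ℤ, Function.Injective (φ.f 0 (-1) q))
    (hzero : ∀ q : ℤ, φ.f 0 0 q = 0) :
    ∀ r : ℕ, (∀ q : ℤ, φ.f r 0 q = 0) ∧
      (∀ p q : ℤ, p ≤ -1 → Function.Injective (φ.f r p q)) ∧
      (∀ p q : ℤ, p ≤ -(r : ℤ) - 2 → Function.Surjective (φ.f r p q))
  | 0 => ⟨hzero,
      fun p q hp => hp.lt_or_eq.elim (fun hp => (hiso p q (by omega)).1) (· ▸ hmono q),
      fun p q hp => (hiso p q (by omega)).2⟩
  | r + 1 => by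
    obtain ⟨hz, hi, hs⟩ := f_eq_zero_injective_surjective hiso hmono hzero r
    exact ⟨fun q => φ.f_succ_eq_zero (hz q),
      fun p q hp => φ.injective_f_succ (hi p q hp) (hs _ _ (by omega)),
      fun p q hp => φ.surjective_f_succ (hs p q (by omega)) (hi _ _ (by omega))⟩

theorem ker_inf_L_le_L_succ {s t : ℤ} {r : ℕ} (hA : A.stab s t ≤ r) (hB : B.stab s t ≤ r)
    (hinj : Function.Injective (φ.f r s t)) :
    (φ.h (s + t)).ker ⊓ A.L s (s + t) ≤ A.L (s + 1) (s + t) := by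
  rintro x ⟨hx₀, hx⟩
  rw [← A.stabIso_mk_eq_zero_iff hA hx]
  apply hinj
  rw [← φ.compat_abut s t r hA hB ⟨x, hx⟩ 0 (by simp [AddMonoidHom.mem_ker.mp hx₀]),
    QuotientAddGroup.mk_zero, map_zero, map_zero]

theorem map_L_le_L_succ {s t : ℤ} {r : ℕ} (hA : A.stab s t ≤ r) (hB : B.stab s t ≤ r)
    (hzero : φ.f r s t = 0) :
    (A.L s (s + t)).map (φ.h (s + t)) ≤ B.L (s + 1) (s + t) := by
  rintro _ ⟨x, hx, rfl⟩
  have hy := φ.filt s (s + t) (AddSubgroup.mem_map_of_mem _ hx)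
  rw [← B.stabIso_mk_eq_zero_iff hB hy, φ.compat_abut s t r hA hB ⟨x, hx⟩ ⟨_, hy⟩ rfl,
    hzero, AddMonoidHom.zero_apply]

end Hom

end ConvSS

theorem ss_realignment_mono_general (A B : ConvSS) (φ : ConvSS.Hom A B)
    (hBcol : ∀ p q : ℤ, 0 < p → Subsingleton ↥(B.E 0 p q))
    (hiso : ∀ p q : ℤ, p ≤ -2 → Function.Bijective (φ.f 0 p q))
    (hmono : ∀ q : ℤ, Function.Injective (φ.f 0 (-1) q))
    (hzero : ∀ q : ℤ, φ.f 0 0 q = 0) :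
    (∀ (r : ℕ) (p q : ℤ), p ≤ -1 → Function.Injective (φ.f r p q)) ∧
    (∀ n : ℤ, (φ.h n).ker = A.L 0 n) := by
  have hpages := φ.f_eq_zero_injective_surjective hiso hmono hzero
  refine ⟨fun r => (hpages r).2.1, fun n => le_antisymm ?_ ?_⟩
  · refine (A.L_antitone n).le_of_inf_le_succ (A.L_exhaustive n) fun s hs => ?_
    obtain ⟨t, rfl⟩ : ∃ t, n = s + t := ⟨n - s, by ring⟩
    exact φ.ker_inf_L_le_L_succ (le_max_left _ _) (le_max_right _ _)
      ((hpages _).2.1 s t (by omega))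
  · obtain ⟨t, rfl⟩ : ∃ t, n = 0 + t := ⟨n, (zero_add n).symm⟩
    have hB₁ : B.L 1 (0 + t) = ⊥ :=
      B.L_eq_bot_of_subsingleton 1 _ fun s t hs => B.subsingleton_E (hBcol s t (by omega)) _
    intro x hx
    have hφx := φ.map_L_le_L_succ (le_max_left _ _) (le_max_right _ _) ((hpages _).1 t)
      (AddSubgroup.mem_map_of_mem _ hx)
    exact AddSubgroup.mem_bot.mp (hB₁ ▸ hφx)

/-- Let `φ : E → F` be a morphism of bounded spectral sequences living
in the columns `p ≤ 0` (II/III quadrants), converging to filtered abutments `H_E`, `H_F`.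
If on the `E₂`-page `φ₂^{p,q}` is an isomorphism for `p ≤ -2`, a monomorphism for
`p = -1` and zero for `p = 0`, then `φ` is a monomorphism on all later pages in columns
`p ≤ -1` (in particular `φ_∞^{p,q}` is monic for `p ≤ -1`), and the kernel of the induced
map `H(φ) : H_E → H_F` equals the filtration subspace `L^0 H_E`. -/
theorem ss_realignment_mono (A B : ConvSS) (φ : ConvSS.Hom A B)
    (hAcol : ∀ p q : ℤ, 0 < p → Subsingleton ↥(A.E 0 p q))
    (hBcol : ∀ p q : ℤ, 0 < p → Subsingleton ↥(B.E 0 p q))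
    (hiso : ∀ p q : ℤ, p ≤ -2 → Function.Bijective (φ.f 0 p q))
    (hmono : ∀ q : ℤ, Function.Injective (φ.f 0 (-1) q))
    (hzero : ∀ q : ℤ, φ.f 0 0 q = 0) :
    (∀ (r : ℕ) (p q : ℤ), p ≤ -1 → Function.Injective (φ.f r p q)) ∧
    (∀ n : ℤ, (φ.h n).ker = A.L 0 n) :=
  ss_realignment_mono_general A B φ hBcol hiso hmono hzero
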